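/- Let X be the unital ℝ-algebra with generators x₁,…,x_N and relations Σ_{k,l} R̂⁻{}^{kl}_{ij} x_k x_l = q⁻¹ x_i x_j + ((q^{N−1}−q^{N−3})/(1+q^{N−2}))·Σ_{k,l} K^{kl}_{ij} x_k x_l and Σ_{k,l} C^{kl} x_k x_l = 1. Then the assignment x_i ↦ Σ_j C^{ij} x_j extends to a well-defined algebra anti-homomorphism of X whose square is the identity (an involution on X). -/

import Mathlib

/-!
The map `x_i ↦ q^{-ρ_i} x_{i'}` lifts from the free algebra to an anti-homomorphism into the
opposite algebra because it sends the relation indexed by `(i, j)` to `q^{-ρ_i-ρ_j}` times the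
relation indexed by `(j', i')`: the coefficient matrices `R̂⁻` and `K` are invariant under
`(k, l, i, j) ↦ (l', k', j', i')` and only couple index pairs of equal weight,
`ρ_k + ρ_l = ρ_i + ρ_j`. The square of the map fixes the generators since `ρ_{i'} = -ρ_i`.
-/

open Matrix BigOperators

noncomputable section

/-- The standard `O_q(N)` exponents ρ_i; here `i : Fin N` is 0-based, so the
1-based index of the paper is `i.val + 1`. -/
def rho (N : ℕ) (i : Fin N) : ℝ :=
  if 2 * ((i : ℕ) + 1) < N + 1 then (N : ℝ) / 2 - ((i : ℕ) + 1)
  else if 2 * ((i : ℕ) + 1) = N + 1 then 0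
  else (N : ℝ) / 2 - ((i : ℕ) + 1) + 1

/-- The index map i ↦ i' = N+1−i (in 1-based indexing). -/
def pr {N : ℕ} (i : Fin N) : Fin N := i.rev

/-- The metric matrix C with entries C^{ij} = q^{−ρ_i} δ_{i,j'}. -/
def Cmat (q : ℝ) (N : ℕ) : Matrix (Fin N) (Fin N) ℝ :=
  fun i j => if j = pr i then Real.rpow q (-(rho N i)) else 0

/-- The matrix K with entries K^{kl}_{ij} = C^{ij} C_{kl}; the row index is (k,l),
the column index is (i,j), so that matrix multiplication realises the composition
(K²)^{kl}_{ij} = Σ_{m,n} K^{kl}_{mn} K^{mn}_{ij}. -/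
def Kmat (q : ℝ) (N : ℕ) : Matrix (Fin N × Fin N) (Fin N × Fin N) ℝ :=
  fun p r => Cmat q N r.1 r.2 * Cmat q N p.1 p.2

/-- The O_q(N) R-matrix R̂ with entries
R̂^{kl}_{ij} = q^{(k=l)−(k=l')}(i=l)(j=k) + (q−q⁻¹)(i<l)((i=k)(j=l) − K^{kl}_{ij});
row index p = (k,l), column index r = (i,j). -/
def Rhat (q : ℝ) (N : ℕ) : Matrix (Fin N × Fin N) (Fin N × Fin N) ℝ :=
  fun p r =>
    q ^ (((if p.1 = p.2 then 1 else 0) - (if p.1 = pr p.2 then 1 else 0) : ℤ)) *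
      (if r.1 = p.2 then 1 else 0) * (if r.2 = p.1 then 1 else 0)
    + (q - q⁻¹) * (if r.1 < p.2 then 1 else 0) *
      ((if r.1 = p.1 then 1 else 0) * (if r.2 = p.2 then 1 else 0) - Kmat q N p r)

/-- R̂⁻ = R̂ − (q−q⁻¹)·I + (q−q⁻¹)·K. -/
def Rm (q : ℝ) (N : ℕ) : Matrix (Fin N × Fin N) (Fin N × Fin N) ℝ :=
  Rhat q N - (q - q⁻¹) • (1 : Matrix (Fin N × Fin N) (Fin N × Fin N) ℝ)
    + (q - q⁻¹) • Kmat q N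

/-- The defining relations of the quantum Euclidean sphere S_q^{N−1} in the
free algebra on the generators x₁,…,x_N. -/
inductive sphereRel (q : ℝ) (N : ℕ) :
    FreeAlgebra ℝ (Fin N) → FreeAlgebra ℝ (Fin N) → Prop
  | quad (i j : Fin N) : sphereRel q N
      (∑ k : Fin N, ∑ l : Fin N,
        Rm q N (k, l) (i, j) • (FreeAlgebra.ι ℝ k * FreeAlgebra.ι ℝ l))
      (q⁻¹ • (FreeAlgebra.ι ℝ i * FreeAlgebra.ι ℝ j) +
        ((q ^ (N - 1) - q ^ (N - 3)) / (1 + q ^ (N - 2))) •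
          ∑ k : Fin N, ∑ l : Fin N,
            Kmat q N (k, l) (i, j) • (FreeAlgebra.ι ℝ k * FreeAlgebra.ι ℝ l))
  | unit : sphereRel q N
      (∑ k : Fin N, ∑ l : Fin N,
        Cmat q N k l • (FreeAlgebra.ι ℝ k * FreeAlgebra.ι ℝ l)) 1

/-- The coordinate algebra of the quantum Euclidean sphere. -/
def SphereAlg (q : ℝ) (N : ℕ) := RingQuot (sphereRel q N)

noncomputable instance (q : ℝ) (N : ℕ) : Ring (SphereAlg q N) :=
  inferInstanceAs (Ring (RingQuot (sphereRel q N)))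

noncomputable instance (q : ℝ) (N : ℕ) : Algebra ℝ (SphereAlg q N) :=
  inferInstanceAs (Algebra ℝ (RingQuot (sphereRel q N)))

/-- The generators x_i of the quantum Euclidean sphere. -/
noncomputable def xgen (q : ℝ) (N : ℕ) (i : Fin N) : SphereAlg q N :=
  RingQuot.mkAlgHom ℝ (sphereRel q N) (FreeAlgebra.ι ℝ i)

lemma LinearMap.involutive_of_map_mul_rev {R A : Type*} [CommSemiring R] [Semiring A]
    [Algebra R A] (φ : A →ₗ[R] A) (h_one : φ 1 = 1)
    (h_mul : ∀ a b, φ (a * b) = φ b * φ a)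
    {s : Set A} (hs : Algebra.adjoin R s = ⊤) (h_gen : ∀ x ∈ s, φ (φ x) = x) :
    Function.Involutive φ := by
  intro a
  have ha : a ∈ Algebra.adjoin R s := hs ▸ Algebra.mem_top
  induction ha using Algebra.adjoin_induction with
  | mem x hx => exact h_gen x hx
  | algebraMap r => rw [Algebra.algebraMap_eq_smul_one, map_smul, map_smul, h_one, h_one]
  | add x y _ _ hx hy => rw [map_add, map_add, hx, hy]
  | mul x y _ _ hx hy => rw [h_mul, h_mul, hx, hy]

section Indices

variable {N : ℕ}

@[simp] lemma pr_pr (i : Fin N) : pr (pr i) = i := Fin.rev_rev i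

@[simp] lemma pr_inj {i j : Fin N} : pr i = pr j ↔ i = j := Fin.rev_inj

@[simp] lemma pr_lt_pr {i j : Fin N} : pr i < pr j ↔ j < i := Fin.rev_lt_rev

lemma lt_pr_comm {i j : Fin N} : i < pr j ↔ j < pr i := Fin.lt_rev_iff

lemma rho_pr (i : Fin N) : rho N (pr i) = -rho N i := by
  have hi : (i : ℕ) + 1 ≤ N := i.2
  have hval : ((pr i : Fin N) : ℕ) = N - ((i : ℕ) + 1) := rfl
  unfold rho
  rw [hval]
  rcases lt_trichotomy (2 * ((i : ℕ) + 1)) (N + 1) with h | h | h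
  · rw [if_neg (by omega), if_neg (by omega), if_pos h]
    push_cast [Nat.cast_sub hi]
    ring
  · rw [if_neg (by omega), if_pos (by omega), if_neg (by omega), if_pos h]
    norm_num
  · rw [if_pos (by omega), if_neg (by omega), if_neg (by omega)]
    push_cast [Nat.cast_sub hi]
    ring

lemma sum_sum_pr {M : Type*} [AddCommMonoid M] (g : Fin N → Fin N → M) :
    ∑ k, ∑ l, g k l = ∑ a, ∑ b, g (pr b) (pr a) := by
  rw [Finset.sum_comm]
  exact (Equiv.sum_comp Fin.revPerm fun l => ∑ k, g k l).symm.trans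
    (Finset.sum_congr rfl fun a _ => (Equiv.sum_comp Fin.revPerm fun k => g k a.rev).symm)

end Indices

def wt (q : ℝ) (N : ℕ) (i : Fin N) : ℝ := q ^ (-rho N i)

section Weights

variable {q : ℝ} {N : ℕ}

lemma Cmat_apply (i j : Fin N) : Cmat q N i j = if j = pr i then wt q N i else 0 := rfl

lemma wt_pr_mul_wt (hq : 0 < q) (i : Fin N) : wt q N (pr i) * wt q N i = 1 := by
  rw [wt, wt, ← Real.rpow_add hq, rho_pr, neg_neg, add_neg_cancel, Real.rpow_zero]

lemma sum_Cmat_smul {M : Type*} [AddCommMonoid M] [Module ℝ M] (g : Fin N → Fin N → M) :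
    ∑ k, ∑ l, Cmat q N k l • g k l = ∑ k, wt q N k • g k (pr k) := by
  simp only [Cmat_apply, ite_smul, zero_smul, Finset.sum_ite_eq', Finset.mem_univ, if_true]

end Weights

section TwoTensors

variable {N : ℕ}

def IsRevInvariant (M : Matrix (Fin N × Fin N) (Fin N × Fin N) ℝ) : Prop :=
  ∀ k l i j, M (pr l, pr k) (pr j, pr i) = M (k, l) (i, j)

def IsWeightHomogeneous (w : Fin N → ℝ) (M : Matrix (Fin N × Fin N) (Fin N × Fin N) ℝ) :
    Prop :=
  ∀ k l i j, w k * w l * M (k, l) (i, j) = w i * w j * M (k, l) (i, j)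

lemma sum_smul_mul_rev {A : Type*} [Ring A] [Algebra ℝ A] {w : Fin N → ℝ}
    {M : Matrix (Fin N × Fin N) (Fin N × Fin N) ℝ} (hM : IsRevInvariant M)
    (hw : IsWeightHomogeneous w M) (x : Fin N → A) (i j : Fin N) :
    ∑ k, ∑ l, M (k, l) (i, j) • ((w l • x (pr l)) * (w k • x (pr k)))
      = (w i * w j) • ∑ a, ∑ b, M (a, b) (pr j, pr i) • (x a * x b) := by
  rw [sum_sum_pr, Finset.smul_sum]
  refine Finset.sum_congr rfl fun a _ => ?_
  rw [Finset.smul_sum]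
  refine Finset.sum_congr rfl fun b _ => ?_
  have hrev := hM (pr b) (pr a) i j
  rw [pr_pr, pr_pr] at hrev
  rw [pr_pr, pr_pr, smul_mul_smul_comm, smul_smul, smul_smul, hrev]
  congr 1
  linear_combination hw (pr b) (pr a) i j

lemma isRevInvariant_one : IsRevInvariant (1 : Matrix (Fin N × Fin N) (Fin N × Fin N) ℝ) := by
  intro k l i j
  simp only [Matrix.one_apply, Prod.mk.injEq, pr_inj, and_comm]

lemma isWeightHomogeneous_one (w : Fin N → ℝ) :
    IsWeightHomogeneous w (1 : Matrix (Fin N × Fin N) (Fin N × Fin N) ℝ) := by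
  intro k l i j
  rw [Matrix.one_apply]
  split_ifs with h
  · obtain ⟨rfl, rfl⟩ := Prod.mk.inj h
    rfl
  · simp

end TwoTensors

section Coefficients

variable {q : ℝ} {N : ℕ}

lemma Kmat_apply (k l i j : Fin N) :
    Kmat q N (k, l) (i, j) =
      (if j = pr i then wt q N i else 0) * (if l = pr k then wt q N k else 0) := rfl

lemma Kmat_eq_zero_of_ne {k l i j : Fin N} (h : j ≠ pr i ∨ l ≠ pr k) :
    Kmat q N (k, l) (i, j) = 0 := by
  rcases h with h | h <;> simp [Kmat_apply, h]

lemma isRevInvariant_Kmat : IsRevInvariant (Kmat q N) := by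
  intro k l i j
  by_cases hK : j = pr i ∧ l = pr k
  · obtain ⟨rfl, rfl⟩ := hK
    simp [Kmat_apply]
  · rw [not_and_or] at hK
    rw [Kmat_eq_zero_of_ne hK, Kmat_eq_zero_of_ne]
    simpa only [ne_eq, pr_pr, eq_comm (a := pr _)] using hK

lemma isWeightHomogeneous_Kmat (hq : 0 < q) : IsWeightHomogeneous (wt q N) (Kmat q N) := by
  intro k l i j
  by_cases hK : j = pr i ∧ l = pr k
  · obtain ⟨rfl, rfl⟩ := hK
    rw [mul_comm (wt q N k), mul_comm (wt q N i), wt_pr_mul_wt hq, wt_pr_mul_wt hq]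
  · rw [Kmat_eq_zero_of_ne (not_and_or.mp hK), mul_zero, mul_zero]

/-- On the support of `K` (`j = i'`, `l = k'`) the orderings `i < l` and `k < j` agree. -/
lemma ite_lt_mul_Kmat (k l i j : Fin N) :
    (if k < j then (1 : ℝ) else 0) * Kmat q N (k, l) (i, j)
      = (if i < l then 1 else 0) * Kmat q N (k, l) (i, j) := by
  by_cases hK : j = pr i ∧ l = pr k
  · obtain ⟨rfl, rfl⟩ := hK
    rw [if_congr lt_pr_comm rfl rfl]
  · rw [Kmat_eq_zero_of_ne (not_and_or.mp hK), mul_zero, mul_zero]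

lemma Rhat_apply (k l i j : Fin N) :
    Rhat q N (k, l) (i, j) =
      q ^ (((if k = l then 1 else 0) - (if k = pr l then 1 else 0) : ℤ)) *
        (if i = l then (1 : ℝ) else 0) * (if j = k then (1 : ℝ) else 0)
      + (q - q⁻¹) * (if i < l then (1 : ℝ) else 0) *
        ((if i = k then (1 : ℝ) else 0) * (if j = l then (1 : ℝ) else 0)
          - Kmat q N (k, l) (i, j)) := rfl

lemma isRevInvariant_Rhat : IsRevInvariant (Rhat q N) := by
  intro k l i j
  rw [Rhat_apply, Rhat_apply, isRevInvariant_Kmat]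
  simp only [pr_pr, pr_inj, pr_lt_pr]
  have hdiag :
      (if k < j then (1 : ℝ) else 0) * ((if j = l then 1 else 0) * (if i = k then 1 else 0))
      = (if i < l then 1 else 0) * ((if i = k then 1 else 0) * (if j = l then 1 else 0)) := by
    by_cases h : i = k ∧ j = l
    · obtain ⟨rfl, rfl⟩ := h
      ring
    · rcases not_and_or.mp h with h | h <;> simp [h]
  simp only [@eq_comm _ l k, @eq_comm _ (pr l) k]
  linear_combination (q - q⁻¹) * (hdiag - ite_lt_mul_Kmat k l i j)

lemma isWeightHomogeneous_Rhat (hq : 0 < q) : IsWeightHomogeneous (wt q N) (Rhat q N) := by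
  intro k l i j
  have hswap : wt q N k * wt q N l * ((if i = l then (1 : ℝ) else 0) * (if j = k then 1 else 0))
      = wt q N i * wt q N j * ((if i = l then 1 else 0) * (if j = k then 1 else 0)) := by
    by_cases h : i = l ∧ j = k
    · obtain ⟨rfl, rfl⟩ := h
      ring
    · rcases not_and_or.mp h with h | h <;> simp [h]
  have hdiag : wt q N k * wt q N l * ((if i = k then (1 : ℝ) else 0) * (if j = l then 1 else 0))
      = wt q N i * wt q N j * ((if i = k then 1 else 0) * (if j = l then 1 else 0)) := by
    by_cases h : i = k ∧ j = l
    · obtain ⟨rfl, rfl⟩ := h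
      rfl
    · rcases not_and_or.mp h with h | h <;> simp [h]
  rw [Rhat_apply]
  linear_combination q ^ (((if k = l then 1 else 0) - (if k = pr l then 1 else 0) : ℤ)) * hswap
    + (q - q⁻¹) * (if i < l then (1 : ℝ) else 0) *
      (hdiag - isWeightHomogeneous_Kmat hq k l i j)

lemma isRevInvariant_Rm : IsRevInvariant (Rm q N) := by
  intro k l i j
  simp only [Rm, Matrix.add_apply, Matrix.sub_apply, Matrix.smul_apply, smul_eq_mul]
  rw [isRevInvariant_Rhat, isRevInvariant_one, isRevInvariant_Kmat]

lemma isWeightHomogeneous_Rm (hq : 0 < q) : IsWeightHomogeneous (wt q N) (Rm q N) := by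
  intro k l i j
  simp only [Rm, Matrix.add_apply, Matrix.sub_apply, Matrix.smul_apply, smul_eq_mul]
  linear_combination isWeightHomogeneous_Rhat hq k l i j
    - (q - q⁻¹) * isWeightHomogeneous_one (wt q N) k l i j
    + (q - q⁻¹) * isWeightHomogeneous_Kmat hq k l i j

end Coefficients

open MulOpposite

section Star

variable {q : ℝ} {N : ℕ}

lemma xgen_quad (i j : Fin N) :
    ∑ k, ∑ l, Rm q N (k, l) (i, j) • (xgen q N k * xgen q N l)
      = q⁻¹ • (xgen q N i * xgen q N j) +
        ((q ^ (N - 1) - q ^ (N - 3)) / (1 + q ^ (N - 2))) •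
          ∑ k, ∑ l, Kmat q N (k, l) (i, j) • (xgen q N k * xgen q N l) := by
  have h := RingQuot.mkAlgHom_rel ℝ (sphereRel.quad (q := q) (N := N) i j)
  simp only [map_sum, map_smul, map_mul, map_add] at h
  exact h

lemma xgen_unit : ∑ k, ∑ l, Cmat q N k l • (xgen q N k * xgen q N l) = 1 := by
  have h := RingQuot.mkAlgHom_rel ℝ (sphereRel.unit (q := q) (N := N))
  simp only [map_sum, map_smul, map_mul, map_one] at h
  exact h

lemma adjoin_range_xgen : Algebra.adjoin ℝ (Set.range (xgen q N)) = ⊤ := by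
  have h := congrArg (Subalgebra.map (RingQuot.mkAlgHom ℝ (sphereRel q N)))
    (FreeAlgebra.adjoin_range_ι ℝ (Fin N))
  rw [← Algebra.adjoin_image, ← Set.range_comp, Algebra.map_top,
    (AlgHom.range_eq_top _).mpr (RingQuot.mkAlgHom_surjective ℝ (sphereRel q N))] at h
  exact h

def starGen (q : ℝ) (N : ℕ) (i : Fin N) : SphereAlg q N := wt q N i • xgen q N (pr i)

lemma starGen_eq_sum_Cmat (i : Fin N) : starGen q N i = ∑ j, Cmat q N i j • xgen q N j := by
  simp only [starGen, Cmat_apply, ite_smul, zero_smul, Finset.sum_ite_eq', Finset.mem_univ,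
    if_true]

def freeStar (q : ℝ) (N : ℕ) : FreeAlgebra ℝ (Fin N) →ₐ[ℝ] (SphereAlg q N)ᵐᵒᵖ :=
  FreeAlgebra.lift ℝ fun i => op (starGen q N i)

lemma freeStar_eq_of_sphereRel (hq : 0 < q) ⦃a b : FreeAlgebra ℝ (Fin N)⦄
    (h : sphereRel q N a b) : freeStar q N a = freeStar q N b := by
  apply unop_injective
  cases h with
  | quad i j =>
    simp only [freeStar, map_add, map_sum, map_smul, map_mul, FreeAlgebra.lift_ι_apply,
      unop_add, Finset.unop_sum, unop_smul, unop_mul, unop_op, starGen]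
    rw [sum_smul_mul_rev isRevInvariant_Rm (isWeightHomogeneous_Rm hq),
      sum_smul_mul_rev isRevInvariant_Kmat (isWeightHomogeneous_Kmat hq),
      xgen_quad (pr j) (pr i), smul_mul_smul_comm]
    module
  | unit =>
    simp only [freeStar, map_sum, map_smul, map_mul, FreeAlgebra.lift_ι_apply,
      Finset.unop_sum, unop_smul, unop_mul, unop_op, map_one, unop_one]
    rw [sum_Cmat_smul, ← xgen_unit, sum_Cmat_smul]
    refine Finset.sum_congr rfl fun k _ => ?_
    rw [starGen, starGen, pr_pr, smul_mul_smul_comm, wt_pr_mul_wt hq, one_smul]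

def sphereStarHom (hq : 0 < q) : SphereAlg q N →ₐ[ℝ] (SphereAlg q N)ᵐᵒᵖ :=
  RingQuot.liftAlgHom ℝ ⟨freeStar q N, freeStar_eq_of_sphereRel hq⟩

def sphereStar (hq : 0 < q) : SphereAlg q N →ₗ[ℝ] SphereAlg q N :=
  (opLinearEquiv ℝ).symm.toLinearMap ∘ₗ (sphereStarHom hq).toLinearMap

lemma sphereStar_apply (hq : 0 < q) (a : SphereAlg q N) :
    sphereStar hq a = unop (sphereStarHom hq a) := rfl

lemma sphereStar_one (hq : 0 < q) : sphereStar hq (1 : SphereAlg q N) = 1 := by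
  rw [sphereStar_apply, map_one, unop_one]

lemma sphereStar_mul (hq : 0 < q) (a b : SphereAlg q N) :
    sphereStar hq (a * b) = sphereStar hq b * sphereStar hq a := by
  simp only [sphereStar_apply, map_mul, unop_mul]

lemma sphereStar_xgen (hq : 0 < q) (i : Fin N) : sphereStar hq (xgen q N i) = starGen q N i := by
  rw [sphereStar_apply, sphereStarHom, xgen]
  exact congrArg unop ((RingQuot.liftAlgHom_mkAlgHom_apply _ _ _ _).trans
    (FreeAlgebra.lift_ι_apply _ _))

lemma sphereStar_involutive (hq : 0 < q) : Function.Involutive (sphereStar (N := N) hq) := by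
  refine LinearMap.involutive_of_map_mul_rev _ (sphereStar_one hq) (sphereStar_mul hq)
    adjoin_range_xgen ?_
  rintro _ ⟨i, rfl⟩
  rw [sphereStar_xgen, starGen, map_smul, sphereStar_xgen, starGen, pr_pr, smul_smul,
    mul_comm, wt_pr_mul_wt hq, one_smul]

end Star

theorem star_structure_general (q : ℝ) (hq : 0 < q) (N : ℕ) :
    ∃ φ : SphereAlg q N →ₗ[ℝ] SphereAlg q N,
      φ 1 = 1 ∧
      (∀ a b : SphereAlg q N, φ (a * b) = φ b * φ a) ∧
      (∀ i : Fin N, φ (xgen q N i) = ∑ j : Fin N, Cmat q N i j • xgen q N j) ∧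
      (∀ a : SphereAlg q N, φ (φ a) = a) :=
  ⟨sphereStar hq, sphereStar_one hq, sphereStar_mul hq,
    fun i => (sphereStar_xgen hq i).trans (starGen_eq_sum_Cmat i), sphereStar_involutive hq⟩

theorem star_structure (q : ℝ) (hq : 0 < q) (hq1 : q ≠ 1) (N : ℕ) (hN : 3 ≤ N) :
    ∃ φ : SphereAlg q N →ₗ[ℝ] SphereAlg q N,
      φ 1 = 1 ∧
      (∀ a b : SphereAlg q N, φ (a * b) = φ b * φ a) ∧
      (∀ i : Fin N, φ (xgen q N i) = ∑ j : Fin N, Cmat q N i j • xgen q N j) ∧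
      (∀ a : SphereAlg q N, φ (φ a) = a) :=
  star_structure_general q hq N
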